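/- Let F be a linearly ordered field, let A be a gap of F, let (a_n) be a strictly increasing sequence in A with a := a_1 such that every x ∈ A with a_1 < x lies in the interval (a_n, a_{n+1}] for exactly one n ∈ ℕ, and suppose (a_n) does not converge to any element of F. Let b ∈ F∖A and E := [a,b]∖A. Then the characteristic function χ_E does not have a Lebesgue integral, and E does not have Lebesgue measure. -/

import Mathlib

namespace Littlewood

variable {F : Type*} [Field F] [LinearOrder F] [IsStrictOrderedRing F]

/-- A sequence `s` in `F` converges to `L`. -/
def SeqConv (s : ℕ → F) (L : F) : Prop :=
  ∀ ε : F, 0 < ε → ∃ N : ℕ, ∀ n, N ≤ n → s n - L ∈ Set.Ioo (-ε) ε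

/-- `φ` is a step function on `[a,b]`: there is a partition
`a = x 0 < x 1 < ⋯ < x n = b` such that `φ` is constant on each open subinterval. -/
def IsStepOn (a b : F) (φ : F → F) : Prop :=
  ∃ (n : ℕ) (x : ℕ → F), x 0 = a ∧ x n = b ∧ (∀ i < n, x i < x (i + 1)) ∧
    ∀ i < n, ∃ M : F, ∀ t ∈ Set.Ioo (x i) (x (i + 1)), φ t = M

/-- `I` is the integral of the step function `φ` over `[a,b]`, computed from
an admissible partition `a = x 0 < ⋯ < x n = b` with constant values `M i`. -/
def HasStepIntegral (a b : F) (φ : F → F) (I : F) : Prop :=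
  ∃ (n : ℕ) (x : ℕ → F) (M : ℕ → F), x 0 = a ∧ x n = b ∧ (∀ i < n, x i < x (i + 1)) ∧
    (∀ i < n, ∀ t ∈ Set.Ioo (x i) (x (i + 1)), φ t = M i) ∧
    I = ∑ i ∈ Finset.range n, M i * (x (i + 1) - x i)

/-- `S ⊆ [a,b]` has measure zero: for every `ε > 0` there is a countable family of
open intervals `(c n, d n) ⊆ [a,b]` covering `S` whose partial sums of lengths
converge to a sum less than `ε`. -/
def NullSet (a b : F) (S : Set F) : Prop :=
  ∀ ε : F, 0 < ε → ∃ c d : ℕ → F,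
    (∀ n, c n ≤ d n ∧ Set.Ioo (c n) (d n) ⊆ Set.Icc a b) ∧
    S ⊆ (⋃ n, Set.Ioo (c n) (d n)) ∧
    ∃ s : F, s < ε ∧ SeqConv (fun N => ∑ k ∈ Finset.range N, (d k - c k)) s

/-- `Q` holds almost everywhere in `[a,b]`. -/
def AEOn (a b : F) (Q : F → Prop) : Prop :=
  NullSet a b {x ∈ Set.Icc a b | ¬ Q x}

/-- `φ` is a monotonically decreasing sequence of step functions `[a,b] → P ∪ {0}`
converging to `f` almost everywhere in `[a,b]`. -/
def ApproxSeq (a b : F) (φ : ℕ → F → F) (f : F → F) : Prop :=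
  (∀ n, IsStepOn a b (φ n)) ∧
  (∀ n, ∀ x ∈ Set.Icc a b, 0 ≤ φ n x) ∧
  (∀ n, ∀ x ∈ Set.Icc a b, φ (n + 1) x ≤ φ n x) ∧
  AEOn a b fun x => SeqConv (fun n => φ n x) (f x)

/-- A nonnegative-valued function on `[a,b]` is Lebesgue measurable. -/
def LebMeasurableNN (a b : F) (f : F → F) : Prop :=
  ∃ φ : ℕ → F → F, ApproxSeq a b φ f

/-- A nonnegative-valued function on `[a,b]` has Lebesgue integral `I`:
it is Lebesgue measurable and for every monotonically decreasing sequence of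
nonnegative step functions converging to `f` a.e., the sequence of their
(step) integrals converges to `I`. -/
def HasLebIntegralNN (a b : F) (f : F → F) (I : F) : Prop :=
  LebMeasurableNN a b f ∧
    ∀ φ : ℕ → F → F, ApproxSeq a b φ f →
      ∀ J : ℕ → F, (∀ n, HasStepIntegral a b (φ n) (J n)) → SeqConv J I

/-- A function `[a,b] → F` is Lebesgue measurable (via its nonnegative parts). -/
def LebMeasurable (a b : F) (f : F → F) : Prop :=
  LebMeasurableNN a b (fun x => max (f x) 0) ∧ LebMeasurableNN a b fun x => max (-f x) 0

/-- A function `[a,b] → F` has a Lebesgue integral (via its nonnegative parts). -/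
def HasLebIntegral (a b : F) (f : F → F) : Prop :=
  (∃ I : F, HasLebIntegralNN a b (fun x => max (f x) 0) I) ∧
  ∃ I : F, HasLebIntegralNN a b (fun x => max (-f x) 0) I

/-- The characteristic function of `E`. -/
noncomputable def chi (E : Set F) : F → F := E.indicator fun _ => 1

/-- `E ⊆ [a,b]` is a measurable set: its characteristic function is Lebesgue measurable. -/
def MeasSet (a b : F) (E : Set F) : Prop := LebMeasurableNN a b (chi E)

/-- `E` has Lebesgue measure: `E` has measure zero or `χ_E` has a Lebesgue integral. -/
def HasLebMeasure (a b : F) (E : Set F) : Prop :=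
  NullSet a b E ∨ ∃ I : F, HasLebIntegralNN a b (chi E) I

/-- `S` is an interval with endpoints `c ≤ d` (any of the four kinds). -/
def IsIntervalWith (S : Set F) (c d : F) : Prop :=
  S = Set.Icc c d ∨ S = Set.Ico c d ∨ S = Set.Ioc c d ∨ S = Set.Ioo c d

/-- `S` is an interval. -/
def IsInterval (S : Set F) : Prop := ∃ c d : F, IsIntervalWith S c d

/-- `f` is continuous on `D`. -/
def ContOn (D : Set F) (f : F → F) : Prop :=
  ∀ c ∈ D, ∀ ε : F, 0 < ε → ∃ δ : F, 0 < δ ∧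
    ∀ x ∈ D ∩ Set.Ioo (c - δ) (c + δ), f x - f c ∈ Set.Ioo (-ε) ε

/-- The functions `g n` converge uniformly to `f` on `D`. -/
def UnifConvOn (D : Set F) (g : ℕ → F → F) (f : F → F) : Prop :=
  ∀ ε : F, 0 < ε → ∃ N : ℕ, ∀ n, N ≤ n → ∀ x ∈ D, f x - g n x ∈ Set.Ioo (-ε) ε

/-- `A` is a cut of `F`. -/
def IsCut (A : Set F) : Prop :=
  A.Nonempty ∧ A ≠ Set.univ ∧ ∀ x ∈ A, ∀ y ∉ A, x < y

/-- `c` is a cut point of `A`. -/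
def IsCutPoint (A : Set F) (c : F) : Prop :=
  ∀ x ∈ A, ∀ y ∉ A, x ≤ c ∧ c ≤ y

variable (F) in
/-- The Cut Axiom: every cut of `F` has a cut point. -/
def CutAxiom : Prop := ∀ A : Set F, IsCut A → ∃ c : F, IsCutPoint A c

variable (F) in
/-- Lebesgue Integral Property. -/
def LIP : Prop :=
  ∀ a b : F, a ≤ b → ∀ f : F → F, LebMeasurable a b f → HasLebIntegral a b f

variable (F) in
/-- Lebesgue Measure Property. -/
def LMP : Prop :=
  ∀ a b : F, a ≤ b → ∀ E ⊆ Set.Icc a b, MeasSet a b E → HasLebMeasure a b E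

variable (F) in
/-- Littlewood's First Principle. -/
def LP1 : Prop :=
  ∀ a b : F, a ≤ b → ∀ E ⊆ Set.Icc a b, MeasSet a b E → ∀ ε : F, 0 < ε →
    ∃ (m : ℕ) (I : ℕ → Set F), (∀ i < m, IsInterval (I i) ∧ I i ⊆ Set.Icc a b) ∧
      ∃ J : F, HasLebIntegralNN a b
        (chi ((E \ ⋃ i < m, I i) ∪ ((⋃ i < m, I i) \ E))) J ∧ J < ε

variable (F) in
/-- Littlewood's Second Principle. -/
def LP2 : Prop :=
  ∀ a b : F, a ≤ b → ∀ f : F → F, LebMeasurable a b f → ∀ ε : F, 0 < ε →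
    ∃ E ⊆ Set.Icc a b, MeasSet a b E ∧ ContOn (Set.Icc a b \ E) f ∧
      ∃ J : F, HasLebIntegralNN a b (chi E) J ∧ J < ε

variable (F) in
/-- Littlewood's Third Principle. -/
def LP3 : Prop :=
  ∀ a b : F, a ≤ b → ∀ φ : ℕ → F → F, (∀ n, LebMeasurable a b (φ n)) →
    ∀ f : F → F, AEOn a b (fun x => SeqConv (fun n => φ n x) (f x)) →
    ∀ ε : F, 0 < ε →
      ∃ E ⊆ Set.Icc a b, MeasSet a b E ∧ UnifConvOn (Set.Icc a b \ E) φ f ∧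
        ∃ J : F, HasLebIntegralNN a b (chi E) J ∧ J < ε


/-! The step functions `χ_(a_n, b]` decrease to `χ_E` at every point of `[a, b]`: a point of
`A` lies below some `a_n` by the covering property, a point outside `A` lies above all of them.
Their integrals `b - a_n` would therefore have to converge to `∫ χ_E`, forcing `a_n` to converge.
Nor is `E` null, since it contains `b` and no open interval around `b` fits inside `[a, b]`. -/

section

variable {F : Type*} [Field F] [LinearOrder F]

open Set

theorem HasStepIntegral.isStepOn {a b I : F} {φ : F → F} (h : HasStepIntegral a b φ I) :
    IsStepOn a b φ := by
  obtain ⟨n, x, M, hx0, hxn, hx, hM, -⟩ := h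
  exact ⟨n, x, hx0, hxn, hx, fun i hi => ⟨M i, hM i hi⟩⟩

theorem hasStepIntegral_of_eqOn_Ioo {a b M : F} {φ : F → F} (hab : a < b)
    (hφ : EqOn φ (fun _ => M) (Ioo a b)) : HasStepIntegral a b φ (M * (b - a)) := by
  refine ⟨1, fun i => if i = 0 then a else b, fun _ => M, rfl, rfl, ?_, ?_, by simp⟩
  · intro i hi
    obtain rfl : i = 0 := by omega
    simpa using hab
  · intro i hi
    obtain rfl : i = 0 := by omega
    exact fun t ht => hφ (by simpa using ht)

theorem hasStepIntegral_of_eqOn_Ioo_of_eqOn_Ioo {a c b M₁ M₂ : F} {φ : F → F}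
    (hac : a < c) (hcb : c < b) (hφ₁ : EqOn φ (fun _ => M₁) (Ioo a c))
    (hφ₂ : EqOn φ (fun _ => M₂) (Ioo c b)) :
    HasStepIntegral a b φ (M₁ * (c - a) + M₂ * (b - c)) := by
  refine ⟨2, fun i => if i = 0 then a else if i = 1 then c else b,
    fun i => if i = 0 then M₁ else M₂, rfl, rfl, ?_, ?_, by simp [Finset.sum_range_succ]⟩
  · intro i hi
    interval_cases i
    · simpa using hac
    · simpa using hcb
  · intro i hi
    interval_cases i
    · exact fun t ht => hφ₁ (by simpa using ht)
    · exact fun t ht => hφ₂ (by simpa using ht)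

theorem hasStepIntegral_indicator_Ioc {a c b : F} (hac : a ≤ c) (hcb : c < b) :
    HasStepIntegral a b ((Ioc c b).indicator 1) (b - c) := by
  have hright : EqOn ((Ioc c b).indicator 1) (fun _ => (1 : F)) (Ioo c b) :=
    fun t ht => indicator_of_mem (Ioo_subset_Ioc_self ht) _
  rcases hac.eq_or_lt with rfl | hac
  · simpa using hasStepIntegral_of_eqOn_Ioo hcb hright
  · have hleft : EqOn ((Ioc c b).indicator 1) (fun _ => (0 : F)) (Ioo a c) :=
      fun t ht => indicator_of_notMem (fun h => h.1.not_gt ht.2) _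
    simpa using hasStepIntegral_of_eqOn_Ioo_of_eqOn_Ioo hac hcb hleft hright

variable [IsStrictOrderedRing F]

theorem seqConv_of_eventually_eq {s : ℕ → F} {L : F} (h : ∃ N, ∀ n, N ≤ n → s n = L) :
    SeqConv s L := by
  obtain ⟨N, hN⟩ := h
  intro ε hε
  exact ⟨N, fun n hn => by simp [hN n hn, hε]⟩

theorem seqConv_const (L : F) : SeqConv (fun _ => L) L :=
  seqConv_of_eventually_eq ⟨0, fun _ _ => rfl⟩

theorem SeqConv.const_sub {s : ℕ → F} {L : F} (h : SeqConv s L) (c : F) :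
    SeqConv (fun n => c - s n) (c - L) := by
  intro ε hε
  obtain ⟨N, hN⟩ := h ε hε
  refine ⟨N, fun n hn => ?_⟩
  have := hN n hn
  simp only [mem_Ioo] at this ⊢
  constructor <;> linarith [this.1, this.2]

theorem nullSet_empty (a b : F) : NullSet a b ∅ := fun _ hε =>
  ⟨fun _ => a, fun _ => a, fun _ => ⟨le_rfl, by simp⟩, empty_subset _, 0, hε,
    by simpa using seqConv_const (0 : F)⟩

theorem AEOn.of_forall {a b : F} {Q : F → Prop} (h : ∀ x ∈ Icc a b, Q x) : AEOn a b Q := by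
  have : {x ∈ Icc a b | ¬ Q x} = ∅ := eq_empty_iff_forall_notMem.2 fun x hx => hx.2 (h x hx.1)
  rw [AEOn, this]
  exact nullSet_empty a b

theorem NullSet.notMem_right {a b : F} {S : Set F} (h : NullSet a b S) : b ∉ S := by
  intro hb
  obtain ⟨c, d, hcd, hcov, -⟩ := h 1 one_pos
  obtain ⟨n, hn⟩ := mem_iUnion.1 (hcov hb)
  have hmid : (b + d n) / 2 ∈ Ioo (c n) (d n) := by
    constructor <;> linarith [hn.1, hn.2]
  linarith [((hcd n).2 hmid).2, hn.2]

theorem seqConv_indicator_Ioc {s : ℕ → F} (hs : Monotone s) {b x : F} (hx : x ∈ Icc (s 0) b) :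
    SeqConv (fun n => (Ioc (s n) b).indicator 1 x)
      (chi {y ∈ Icc (s 0) b | ∀ n, s n < y} x) := by
  apply seqConv_of_eventually_eq
  by_cases hlt : ∀ n, s n < x
  · refine ⟨0, fun n _ => ?_⟩
    have hxE : x ∈ {y ∈ Icc (s 0) b | ∀ n, s n < y} := ⟨hx, hlt⟩
    have hxn : x ∈ Ioc (s n) b := ⟨hlt n, hx.2⟩
    rw [chi, indicator_of_mem hxE, indicator_of_mem hxn, Pi.one_apply]
  · obtain ⟨N, hN⟩ := not_forall.1 hlt
    refine ⟨N, fun n hn => ?_⟩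
    have hxn : x ≤ s n := (not_lt.1 hN).trans (hs hn)
    have hnot : ¬ ∀ m, s m < x := fun h => (h n).not_ge hxn
    simp [chi, hnot, hxn.not_gt]

theorem approxSeq_indicator_Ioc {s : ℕ → F} (hs : Monotone s) {b : F} (hsb : ∀ n, s n < b) :
    ApproxSeq (s 0) b (fun n => (Ioc (s n) b).indicator 1)
      (chi {y ∈ Icc (s 0) b | ∀ n, s n < y}) :=
  ⟨fun n => (hasStepIntegral_indicator_Ioc (hs n.zero_le) (hsb n)).isStepOn,
    fun _ _ _ => indicator_nonneg (fun _ _ => zero_le_one) _,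
    fun n _ _ => indicator_le_indicator_of_subset (Ioc_subset_Ioc_left (hs n.le_succ))
      (fun _ => zero_le_one) _,
    AEOn.of_forall fun _ hx => seqConv_indicator_Ioc hs hx⟩

end

theorem gap_set_has_no_lebesgue_measure_general (F : Type*) [Field F] [LinearOrder F] [IsStrictOrderedRing F]
    (A : Set F) (hcut : IsCut A)
    (s : ℕ → F) (hmem : ∀ n, s n ∈ A) (hmono : StrictMono s)
    (hcover : ∀ x ∈ A, s 0 < x → ∃! n : ℕ, x ∈ Set.Ioc (s n) (s (n + 1)))
    (hnoconv : ¬ ∃ L : F, SeqConv s L)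
    (b : F) (hb : b ∉ A) :
    (¬ ∃ I : F, HasLebIntegralNN (s 0) b (chi (Set.Icc (s 0) b \ A)) I) ∧
    ¬ HasLebMeasure (s 0) b (Set.Icc (s 0) b \ A) := by
  have hsb : ∀ n, s n < b := fun n => hcut.2.2 _ (hmem n) _ hb
  have hE : Set.Icc (s 0) b \ A = {y ∈ Set.Icc (s 0) b | ∀ n, s n < y} := by
    ext x
    refine ⟨fun hx => ⟨hx.1, fun n => hcut.2.2 _ (hmem n) _ hx.2⟩, fun hx => ⟨hx.1, fun hxA => ?_⟩⟩
    obtain ⟨n, hn, -⟩ := hcover x hxA (hx.2 0)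
    exact (hx.2 (n + 1)).not_ge hn.2
  have hnoI : ¬ ∃ I : F, HasLebIntegralNN (s 0) b (chi (Set.Icc (s 0) b \ A)) I := by
    rintro ⟨I, -, hI⟩
    rw [hE] at hI
    have hJ := hI _ (approxSeq_indicator_Ioc hmono.monotone hsb) _
      fun n => hasStepIntegral_indicator_Ioc (hmono.monotone n.zero_le) (hsb n)
    exact hnoconv ⟨b - I, by simpa using hJ.const_sub b⟩
  refine ⟨hnoI, ?_⟩
  rintro (hnull | hint)
  · exact hnull.notMem_right ⟨⟨(hsb 0).le, le_rfl⟩, hb⟩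
  · exact hnoI hint

theorem gap_set_has_no_lebesgue_measure (F : Type*) [Field F] [LinearOrder F] [IsStrictOrderedRing F]
    (A : Set F) (hcut : IsCut A) (hgap : ¬ ∃ c : F, IsCutPoint A c)
    (s : ℕ → F) (hmem : ∀ n, s n ∈ A) (hmono : StrictMono s)
    (hcover : ∀ x ∈ A, s 0 < x → ∃! n : ℕ, x ∈ Set.Ioc (s n) (s (n + 1)))
    (hnoconv : ¬ ∃ L : F, SeqConv s L)
    (b : F) (hb : b ∉ A) :
    (¬ ∃ I : F, HasLebIntegralNN (s 0) b (chi (Set.Icc (s 0) b \ A)) I) ∧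
    ¬ HasLebMeasure (s 0) b (Set.Icc (s 0) b \ A) :=
  gap_set_has_no_lebesgue_measure_general F A hcut s hmem hmono hcover hnoconv b hb

end Littlewood
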